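/- Let D be a closed half-plane in the complex plane, i.e. D = {z ∈ ℂ : re(α·z) ≤ t} for some nonzero α ∈ ℂ and t ∈ ℝ. Then for every positive integer n and all complex numbers z₁, z₂, …, zₙ ∈ D, there exists z ∈ D such that zⁿ = z₁ · z₂ ⋯ zₙ. -/

import Mathlib

/-!
Scaling reduces the claim to two half-planes. If `t ≥ 0`, the half-plane contains `{re ≤ 0}`; for
`n ≥ 2` the `n`-th roots `w ζᵏ` of the product sum to zero, so one of them has nonpositive real part.
If `t < 0`, it suffices to treat `{1 ≤ re}`. It is the exponential image of
`{x + iy : |y| < π/2, -log cos y ≤ x}`, which is convex because `log ∘ cos` is concave; so the mean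
of logarithms of the `zᵢ` lies in it again, and its exponential is an `n`-th root of `∏ zᵢ`.
-/

open Real Set

def ContainsGeomMeans (D : Set ℂ) : Prop :=
  ∀ n : ℕ, 0 < n → ∀ z : Fin n → ℂ, (∀ i, z i ∈ D) → ∃ w ∈ D, w ^ n = ∏ i, z i

theorem ContainsGeomMeans.preimage_const_mul {D : Set ℂ} (hD : ContainsGeomMeans D) {c : ℂ}
    (hc : c ≠ 0) : ContainsGeomMeans ((c * ·) ⁻¹' D) := by
  intro n hn z hz
  obtain ⟨w, hwD, hw⟩ := hD n hn (fun i => c * z i) hz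
  refine ⟨w / c, by simpa [mul_div_cancel₀ _ hc] using hwD, ?_⟩
  rw [div_pow, hw, Finset.prod_mul_distrib, Finset.prod_const, Finset.card_univ,
    Fintype.card_fin, mul_div_cancel_left₀ _ (pow_ne_zero n hc)]

theorem containsGeomMeans_exp_image {S : Set ℂ} (hS : Convex ℝ S) :
    ContainsGeomMeans (Complex.exp '' S) := by
  intro n hn z hz
  choose u huS hu using hz
  have hn' : (0 : ℝ) < n := Nat.cast_pos.2 hn
  refine ⟨Complex.exp ((n : ℂ)⁻¹ * ∑ i, u i), ⟨_, ?_, rfl⟩, ?_⟩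
  · have := hS.sum_mem (t := Finset.univ) (w := fun _ => (n : ℝ)⁻¹) (fun _ _ => by positivity)
      (by simp [hn'.ne']) (fun i _ => huS i)
    simpa [Finset.mul_sum, Complex.real_smul] using this
  · rw [← Complex.exp_nat_mul, ← mul_assoc, mul_inv_cancel₀ (Nat.cast_ne_zero.2 hn.ne'), one_mul,
      Complex.exp_sum]
    simp only [hu]

theorem Complex.exists_pow_eq_re_nonpos {n : ℕ} (hn : 2 ≤ n) (p : ℂ) :
    ∃ w : ℂ, w.re ≤ 0 ∧ w ^ n = p := by
  obtain ⟨w, hw⟩ := IsAlgClosed.exists_pow_nat_eq p (by omega : 0 < n)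
  have hζ := Complex.isPrimitiveRoot_exp n (by omega)
  set ζ := Complex.exp (2 * π * Complex.I / n)
  have hsum : ∑ k ∈ Finset.range n, (w * ζ ^ k).re = 0 := by
    rw [← Complex.re_sum, ← Finset.mul_sum, hζ.geom_sum_eq_zero (by omega), mul_zero,
      Complex.zero_re]
  obtain ⟨k, -, hk⟩ := Finset.exists_le_of_sum_le (Finset.nonempty_range_iff.2 (by omega))
    (hsum.trans Finset.sum_const_zero.symm).le
  refine ⟨w * ζ ^ k, hk, ?_⟩
  rw [mul_pow, ← pow_mul, mul_comm k n, pow_mul, hζ.pow_eq_one, one_pow, mul_one, hw]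

theorem containsGeomMeans_re_le {t : ℝ} (ht : 0 ≤ t) : ContainsGeomMeans {v : ℂ | v.re ≤ t} := by
  intro n hn z hz
  obtain rfl | hn2 : n = 1 ∨ 2 ≤ n := by omega
  · exact ⟨z 0, hz 0, by simp⟩
  obtain ⟨w, hw, hwp⟩ := Complex.exists_pow_eq_re_nonpos hn2 (∏ i, z i)
  exact ⟨w, hw.trans ht, hwp⟩

theorem concaveOn_log_cos : ConcaveOn ℝ (Ioo (-(π / 2)) (π / 2)) (fun x => log (cos x)) := by
  have hcos : cos '' Ioo (-(π / 2)) (π / 2) ⊆ Ioi 0 := by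
    rintro _ ⟨x, hx, rfl⟩; exact cos_pos_of_mem_Ioo hx
  refine (strictConcaveOn_log_Ioi.concaveOn.subset hcos ?_).comp
    (strictConcaveOn_cos_Icc.concaveOn.subset Ioo_subset_Icc_self (convex_Ioo _ _))
    (strictMonoOn_log.monotoneOn.mono hcos)
  exact ((convex_Ioo _ _).isPreconnected.image _ continuous_cos.continuousOn).ordConnected.convex

theorem one_le_exp_mul_cos_iff {x y : ℝ} (hy : 0 < cos y) :
    1 ≤ exp x * cos y ↔ -log (cos y) ≤ x := by
  rw [← log_le_log_iff one_pos (by positivity), log_mul (exp_pos x).ne' hy.ne', log_exp, log_one,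
    neg_le_iff_add_nonneg]

theorem convex_setOf_one_le_exp_re :
    Convex ℝ {w : ℂ | w.im ∈ Ioo (-(π / 2)) (π / 2) ∧ 1 ≤ (Complex.exp w).re} := by
  rintro x ⟨hxi, hx⟩ y ⟨hyi, hy⟩ a b ha hb hab
  have him : a * x.im + b * y.im ∈ Ioo (-(π / 2)) (π / 2) := convex_Ioo _ _ hxi hyi ha hb hab
  simp only [Complex.exp_re, Complex.add_re, Complex.add_im, Complex.real_smul,
    Complex.re_ofReal_mul, Complex.im_ofReal_mul, mem_ofPred_eq] at hx hy ⊢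
  rw [one_le_exp_mul_cos_iff (cos_pos_of_mem_Ioo hxi)] at hx
  rw [one_le_exp_mul_cos_iff (cos_pos_of_mem_Ioo hyi)] at hy
  refine ⟨him, (one_le_exp_mul_cos_iff (cos_pos_of_mem_Ioo him)).2 ?_⟩
  calc -log (cos (a * x.im + b * y.im))
      ≤ -(a * log (cos x.im) + b * log (cos y.im)) :=
        neg_le_neg (concaveOn_log_cos.2 hxi hyi ha hb hab)
    _ ≤ a * x.re + b * y.re := by nlinarith

theorem exp_image_setOf_one_le_exp_re :
    Complex.exp '' {w : ℂ | w.im ∈ Ioo (-(π / 2)) (π / 2) ∧ 1 ≤ (Complex.exp w).re} =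
      {v : ℂ | 1 ≤ v.re} := by
  refine subset_antisymm (image_subset_iff.2 fun w hw => hw.2) fun v hv => ?_
  have hv_re : 0 < v.re := zero_lt_one.trans_le hv
  have hv0 : v ≠ 0 := by rintro rfl; simp at hv_re
  have harg := Complex.abs_arg_lt_pi_div_two_iff.2 (Or.inl hv_re)
  refine ⟨Complex.log v, ⟨?_, ?_⟩, Complex.exp_log hv0⟩
  · rw [Complex.log_im]; exact abs_lt.1 harg
  · rwa [Complex.exp_log hv0]

theorem containsGeomMeans_one_le_re : ContainsGeomMeans {v : ℂ | 1 ≤ v.re} :=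
  exp_image_setOf_one_le_exp_re ▸ containsGeomMeans_exp_image convex_setOf_one_le_exp_re

/-- Closed half-plane case of Proposition 2: for z₁,…,zₙ in a closed half-plane
D = {z : re(α z) ≤ t}, there is z ∈ D with zⁿ = z₁⋯zₙ. -/
theorem geometric_mean_halfPlane (α : ℂ) (hα : α ≠ 0) (t : ℝ)
    (n : ℕ) (hn : 0 < n) (z : Fin n → ℂ)
    (hz : ∀ i, z i ∈ {w : ℂ | (α * w).re ≤ t}) :
    ∃ w ∈ {w : ℂ | (α * w).re ≤ t}, w ^ n = ∏ i, z i := by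
  suffices ContainsGeomMeans {w : ℂ | (α * w).re ≤ t} from this n hn z hz
  rcases le_or_gt 0 t with ht | ht
  · exact (containsGeomMeans_re_le ht).preimage_const_mul hα
  · have hD : {w : ℂ | (α * w).re ≤ t} = ((α / t) * ·) ⁻¹' {v : ℂ | 1 ≤ v.re} := by
      ext w
      simp only [mem_ofPred_eq, mem_preimage, div_mul_eq_mul_div, Complex.div_ofReal_re,
        le_div_iff_of_neg ht, one_mul]
    rw [hD]
    exact containsGeomMeans_one_le_re.preimage_const_mul (div_ne_zero hα (by exact_mod_cast ht.ne))
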